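/- Under the hypotheses of the quadratic spreading proposition (α > 0, (ηₙ) summable, (Wₙ) self-adjoint with Wₙ ≽ α·Id, sup_n ‖Wₙ‖ < +∞, (1+ηₙ)Wₙ ≽ Wₙ₊₁, C ⊆ H nonempty, and (xₙ) satisfying ‖xₙ₊₁ − z‖²_{Wₙ₊₁} ≤ (1+ηₙ)‖xₙ − z‖²_{Wₙ} + εₙ(z) with summable εₙ(z) for each z ∈ C), for every y in the closed convex hull of C, the sequence (‖xₙ − y‖_{Wₙ}) converges. -/

import Mathlib

open Filter Topology

noncomputable def wnorm {H : Type*} [NormedAddCommGroup H] [InnerProductSpace ℝ H]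
    (W : H →L[ℝ] H) (x : H) : ℝ :=
  Real.sqrt (inner ℝ (W x) x : ℝ)

/-! The quantities `‖xₙ - z‖²_{Wₙ}` for `z ∈ C` and `‖v‖²_{Wₙ}` for fixed `v` satisfy quasi-Fejér
recursions, hence converge. For symmetric `W` and `a + b = 1`,
`‖a • u + b • v‖²_W = a ‖u‖²_W + b ‖v‖²_W - a b ‖u - v‖²_W`, which carries convergence of
`‖xₙ - y‖²_{Wₙ}` from `y₁, y₂` to their convex combinations (the last term is `‖y₂ - y₁‖²_{Wₙ}`),
so to all of `conv C`. Since `(xₙ)` and `(‖Wₙ‖)` are bounded, the maps `y ↦ ‖xₙ - y‖²_{Wₙ}` are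
equicontinuous, and convergence passes to the closure. -/

open RealInnerProductSpace

lemma exists_tendsto_of_le_add_of_summable {b δ : ℕ → ℝ} (hb : BddBelow (Set.range b))
    (hδ : Summable δ) (hrec : ∀ n, b (n + 1) ≤ b n + δ n) : ∃ l, Tendsto b atTop (𝓝 l) := by
  -- `b` plus the tail sums of `δ` is antitone
  set t : ℕ → ℝ := fun n => ∑' k, δ (k + n)
  have ht : Tendsto t atTop (𝓝 0) := tendsto_sum_nat_add δ
  have ht_succ : ∀ n, t n = δ n + t (n + 1) := fun n => by
    simpa only [t, zero_add, Nat.add_right_comm _ 1 n, ← add_assoc] using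
      ((summable_nat_add_iff n).2 hδ).tsum_eq_zero_add
  have hanti : Antitone (b + t) :=
    antitone_nat_of_succ_le fun n => by simp only [Pi.add_apply]; linarith [hrec n, ht_succ n]
  have hbdd : BddBelow (Set.range (b + t)) := by
    obtain ⟨m, hm⟩ := hb
    obtain ⟨m', hm'⟩ := ht.bddBelow_range
    exact ⟨m + m', by rintro _ ⟨n, rfl⟩; exact add_le_add (hm ⟨n, rfl⟩) (hm' ⟨n, rfl⟩)⟩
  exact ⟨_, by simpa using (tendsto_atTop_ciInf hanti hbdd).sub ht⟩

lemma exists_tendsto_of_le_one_add_mul_add {b η ε : ℕ → ℝ} (hb : ∀ n, 0 ≤ b n)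
    (hη0 : ∀ n, 0 ≤ η n) (hη : Summable η) (hε0 : ∀ n, 0 ≤ ε n) (hε : Summable ε)
    (hrec : ∀ n, b (n + 1) ≤ (1 + η n) * b n + ε n) : ∃ l, Tendsto b atTop (𝓝 l) := by
  set P : ℕ → ℝ := fun n => ∏ k ∈ Finset.range n, (1 + η k)
  have hP1 : ∀ n, 1 ≤ P n := fun n => Finset.one_le_prod fun k _ => by linarith [hη0 k]
  have hP_succ : ∀ n, P (n + 1) = P n * (1 + η n) := fun n => Finset.prod_range_succ _ _
  have hPmono : Monotone P :=
    monotone_nat_of_le_succ fun n =>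
      hP_succ n ▸ le_mul_of_one_le_right (by linarith [hP1 n]) (by linarith [hη0 n])
  have hPbdd : BddAbove (Set.range P) := by
    refine ⟨Real.exp (∑' k, η k), ?_⟩
    rintro _ ⟨n, rfl⟩
    exact (Real.prod_one_add_le_exp_sum _ hη0).trans
      (Real.exp_le_exp.2 (hη.sum_le_tsum _ fun k _ => hη0 k))
  -- dividing by `P` removes the factors `1 + η n` from the recursion
  obtain ⟨c, hc⟩ : ∃ c, Tendsto (fun n => b n / P n) atTop (𝓝 c) := by
    refine exists_tendsto_of_le_add_of_summable ⟨0, ?_⟩ hε fun n => ?_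
    · rintro _ ⟨n, rfl⟩
      exact div_nonneg (hb n) (by linarith [hP1 n])
    have hηn : 1 + η n ≠ 0 := by linarith [hη0 n]
    calc b (n + 1) / P (n + 1) ≤ ((1 + η n) * b n + ε n) / P (n + 1) :=
          div_le_div_of_nonneg_right (hrec n) (by linarith [hP1 (n + 1)])
      _ = b n / P n + ε n / P (n + 1) := by
          rw [hP_succ, add_div, mul_comm (P n), mul_div_mul_left _ _ hηn]
      _ ≤ b n / P n + ε n := by gcongr; exact div_le_self (hε0 n) (hP1 _)
  refine ⟨c * ⨆ n, P n, (hc.mul (tendsto_atTop_ciSup hPmono hPbdd)).congr fun n => ?_⟩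
  exact div_mul_cancel₀ _ (by linarith [hP1 n])

lemma EquicontinuousAt.cauchySeq_of_mem_closure {X α : Type*} [TopologicalSpace X]
    [PseudoMetricSpace α] {F : ℕ → X → α} {s : Set X} {y : X} (hF : EquicontinuousAt F y)
    (hs : ∀ z ∈ s, CauchySeq (F · z)) (hy : y ∈ closure s) : CauchySeq (F · y) := by
  rw [Metric.cauchySeq_iff]
  intro ε hε
  obtain ⟨z, hzF, hzs⟩ : ∃ z, (∀ n, dist (F n y) (F n z) < ε / 3) ∧ z ∈ s :=
    ((Metric.equicontinuousAt_iff_right.1 hF _ (by positivity)).and_frequently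
      (mem_closure_iff_frequently.1 hy)).exists
  obtain ⟨N, hN⟩ := Metric.cauchySeq_iff.1 (hs z hzs) _ (by positivity : 0 < ε / 3)
  refine ⟨N, fun m hm n hn => ?_⟩
  calc dist (F m y) (F n y) ≤ dist (F m y) (F m z) + dist (F m z) (F n z) + dist (F n z) (F n y) :=
        dist_triangle4 _ _ _ _
    _ < ε / 3 + ε / 3 + ε / 3 := by
        gcongr
        · exact hzF m
        · exact hN m hm n hn
        · rw [dist_comm]; exact hzF n
    _ = ε := by ring

section QuadraticForm

variable {H : Type*} [NormedAddCommGroup H] [InnerProductSpace ℝ H]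

lemma LinearMap.IsSymmetric.inner_map_smul_add_smul_self {T : H →ₗ[ℝ] H} (hT : T.IsSymmetric)
    (u v : H) {a b : ℝ} (hab : a + b = 1) :
    ⟪T (a • u + b • v), a • u + b • v⟫ =
      a * ⟪T u, u⟫ + b * ⟪T v, v⟫ - a * b * ⟪T (u - v), u - v⟫ := by
  obtain rfl : b = 1 - a := by linarith
  simp only [map_add, map_smul, map_sub, inner_add_left, inner_add_right, inner_sub_left,
    inner_sub_right, real_inner_smul_left, real_inner_smul_right, hT v u]
  ring

lemma ContinuousLinearMap.abs_inner_apply_self_sub_le (T : H →L[ℝ] H) (u v : H) :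
    |⟪T u, u⟫ - ⟪T v, v⟫| ≤ ‖T‖ * (‖u‖ + ‖v‖) * ‖u - v‖ := by
  have hsplit : ⟪T u, u⟫ - ⟪T v, v⟫ = ⟪T (u - v), u⟫ + ⟪T v, u - v⟫ := by
    simp only [map_sub, inner_sub_left, inner_sub_right]; ring
  have hbound : ∀ w w' : H, |⟪T w, w'⟫| ≤ ‖T‖ * ‖w‖ * ‖w'‖ := fun w w' =>
    (abs_real_inner_le_norm _ _).trans (by gcongr; exact T.le_opNorm w)
  calc |⟪T u, u⟫ - ⟪T v, v⟫| ≤ |⟪T (u - v), u⟫| + |⟪T v, u - v⟫| := hsplit ▸ abs_add_le _ _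
    _ ≤ ‖T‖ * ‖u - v‖ * ‖u‖ + ‖T‖ * ‖v‖ * ‖u - v‖ := add_le_add (hbound _ _) (hbound _ _)
    _ = ‖T‖ * (‖u‖ + ‖v‖) * ‖u - v‖ := by ring

variable {T : ℕ → H →L[ℝ] H} {x : ℕ → H}

lemma convex_setOf_exists_tendsto_inner_apply_sub (hT : ∀ n, (T n : H →ₗ[ℝ] H).IsSymmetric)
    (hconv : ∀ v, ∃ l, Tendsto (fun n => ⟪T n v, v⟫) atTop (𝓝 l)) :
    Convex ℝ {y | ∃ l, Tendsto (fun n => ⟪T n (x n - y), x n - y⟫) atTop (𝓝 l)} := by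
  rintro y₁ ⟨l₁, h₁⟩ y₂ ⟨l₂, h₂⟩ a b - - hab
  obtain ⟨l, h⟩ := hconv (y₂ - y₁)
  refine ⟨a * l₁ + b * l₂ - a * b * l, ?_⟩
  refine (((h₁.const_mul a).add (h₂.const_mul b)).sub (h.const_mul (a * b))).congr fun n => ?_
  have hcomb : x n - (a • y₁ + b • y₂) = a • (x n - y₁) + b • (x n - y₂) := by
    match_scalars <;> linarith
  have hdiff : (x n - y₁) - (x n - y₂) = y₂ - y₁ := by abel
  rw [hcomb, ← hdiff]
  exact ((hT n).inner_map_smul_add_smul_self _ _ hab).symm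

lemma equicontinuous_inner_apply_sub {μ R : ℝ} (hT : ∀ n, ‖T n‖ ≤ μ) (hx : ∀ n, ‖x n‖ ≤ R) :
    Equicontinuous fun n y => ⟪T n (x n - y), x n - y⟫ := by
  intro y₀
  have hμ : 0 ≤ μ := (norm_nonneg _).trans (hT 0)
  refine Metric.equicontinuousAt_of_continuity_modulus
    (fun y => μ * (2 * (R + ‖y₀‖) + 1) * ‖y - y₀‖) ?_ _ ?_
  · simpa using (((tendsto_id (x := 𝓝 y₀)).sub_const y₀).norm.const_mul
      (μ * (2 * (R + ‖y₀‖) + 1)))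
  filter_upwards [Metric.ball_mem_nhds y₀ one_pos] with y hy n
  rw [mem_ball_iff_norm] at hy
  rw [Real.dist_eq]
  refine ((T n).abs_inner_apply_self_sub_le _ _).trans ?_
  rw [sub_sub_sub_cancel_left]
  have h₀ : ‖x n - y₀‖ ≤ R + ‖y₀‖ := (norm_sub_le _ _).trans (by linarith [hx n])
  have h₁ : ‖x n - y‖ ≤ R + ‖y₀‖ + 1 := by
    calc ‖x n - y‖ ≤ ‖x n - y₀‖ + ‖y₀ - y‖ := norm_sub_le_norm_sub_add_norm_sub _ _ _
      _ ≤ R + ‖y₀‖ + 1 := by rw [norm_sub_rev] at hy; linarith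
  have hsum : ‖x n - y₀‖ + ‖x n - y‖ ≤ 2 * (R + ‖y₀‖) + 1 := by linarith
  exact mul_le_mul_of_nonneg_right (mul_le_mul (hT n) hsum (by positivity) hμ) (norm_nonneg _)

lemma exists_forall_norm_le_of_tendsto_inner_apply_sub {α : ℝ} (hα : 0 < α)
    (hT : ∀ n v, α * ‖v‖ ^ 2 ≤ ⟪T n v, v⟫) {z : H} {l : ℝ}
    (hz : Tendsto (fun n => ⟪T n (x n - z), x n - z⟫) atTop (𝓝 l)) : ∃ R, ∀ n, ‖x n‖ ≤ R := by
  obtain ⟨B, hB⟩ := hz.bddAbove_range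
  refine ⟨‖z‖ + √(B / α), fun n => ?_⟩
  have hdist : ‖x n - z‖ ≤ √(B / α) :=
    Real.le_sqrt_of_sq_le ((le_div_iff₀ hα).2 (by linarith [hT n (x n - z), hB ⟨n, rfl⟩]))
  linarith [norm_le_insert' (x n) z]

end QuadraticForm

theorem stmt_9 {H : Type*} [NormedAddCommGroup H] [InnerProductSpace ℝ H] [CompleteSpace H]
    (α : ℝ) (hα : 0 < α)
    (η : ℕ → ℝ) (hη0 : ∀ n, 0 ≤ η n) (hη : Summable η)
    (W : ℕ → H →L[ℝ] H) (hsa : ∀ n, IsSelfAdjoint (W n))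
    (hlb : ∀ n (x : H), α * ‖x‖ ^ 2 ≤ (inner ℝ (W n x) x : ℝ))
    (hbd : ∃ μ : ℝ, ∀ n, ‖W n‖ ≤ μ)
    (hmono : ∀ n (x : H), (inner ℝ (W (n + 1) x) x : ℝ) ≤ (1 + η n) * (inner ℝ (W n x) x : ℝ))
    (C : Set H) (hC : C.Nonempty) (x : ℕ → H)
    (hfejer : ∀ z ∈ C, ∃ ε : ℕ → ℝ, (∀ n, 0 ≤ ε n) ∧ Summable ε ∧
      ∀ n, wnorm (W (n + 1)) (x (n + 1) - z) ^ 2 ≤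
        (1 + η n) * wnorm (W n) (x n - z) ^ 2 + ε n) :
    ∀ y ∈ closure (convexHull ℝ C),
      ∃ l : ℝ, Tendsto (fun n => wnorm (W n) (x n - y)) atTop (𝓝 l) := by
  obtain ⟨μ, hμ⟩ := hbd
  have hW0 : ∀ n v, 0 ≤ ⟪W n v, v⟫ := fun n v => (mul_nonneg hα.le (sq_nonneg _)).trans (hlb n v)
  set S := {y | ∃ l, Tendsto (fun n => ⟪W n (x n - y), x n - y⟫) atTop (𝓝 l)}
  have hCS : C ⊆ S := fun z hz => by
    obtain ⟨ε, hε0, hε, hrec⟩ := hfejer z hz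
    refine exists_tendsto_of_le_one_add_mul_add (fun n => hW0 n _) hη0 hη hε0 hε fun n => ?_
    simpa only [wnorm, Real.sq_sqrt (hW0 _ _)] using hrec n
  have hS : Convex ℝ S := convex_setOf_exists_tendsto_inner_apply_sub
    (fun n => (hsa n).isSymmetric) fun v => exists_tendsto_of_le_one_add_mul_add
      (fun n => hW0 n v) hη0 hη (fun _ => le_rfl) summable_zero fun n => by simpa using hmono n v
  obtain ⟨z, hz⟩ := hC
  obtain ⟨l₀, hl₀⟩ := hCS hz
  obtain ⟨R, hR⟩ := exists_forall_norm_le_of_tendsto_inner_apply_sub hα hlb hl₀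
  intro y hy
  obtain ⟨l, hl⟩ := cauchySeq_tendsto_of_complete <|
    (equicontinuous_inner_apply_sub hμ hR y).cauchySeq_of_mem_closure
      (fun _ hS' => hS'.choose_spec.cauchySeq) (closure_mono (convexHull_min hCS hS) hy)
  exact ⟨√l, hl.sqrt⟩
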